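/- arXiv:1907.03677 — 4 statements merged into one kernel-verified Lean document; each statement's English description precedes it below -/
import Mathlib

section
/- Suppose a $2\times 2$ block unitary matrix $\begin{bmatrix} \bar{C} & \bar{S} \\ -S & C \end{bmatrix}$ with $s\times s$ blocks satisfies $\begin{bmatrix} \bar{C} & \bar{S} \\ -S & C \end{bmatrix}\begin{bmatrix} H_1 \\ H_2 \end{bmatrix} = \begin{bmatrix} \Xi \\ 0 \end{bmatrix}$, where $H_2$ is upper triangular with positive diagonal entries and $\bar{S}$ is invertible with $\bar{S}^{-*}$ upper triangular with positive diagonal entries. Then $\Xi = \bar{S}^{-*} H_2$, and $\Xi$ is upper triangular with positive diagonal entries. -/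
open Matrix

/-- Upper triangular with positive (real) diagonal entries. -/
def UpperTriPosDiag {s : ℕ} (M : Matrix (Fin s) (Fin s) ℂ) : Prop :=
  (∀ i j : Fin s, (j : ℕ) < (i : ℕ) → M i j = 0) ∧
    ∀ i : Fin s, 0 < (M i i).re ∧ (M i i).im = 0

lemma UpperTriPosDiag.mul {s : ℕ} {M N : Matrix (Fin s) (Fin s) ℂ}
    (hM : UpperTriPosDiag M) (hN : UpperTriPosDiag N) : UpperTriPosDiag (M * N) := by
  constructor
  · intro i j hij
    rw [Matrix.mul_apply]
    apply Finset.sum_eq_zero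
    intro k _
    rcases lt_or_ge (k : ℕ) (i : ℕ) with h | h
    · rw [hM.1 i k h, zero_mul]
    · rw [hN.1 k j (lt_of_lt_of_le hij h), mul_zero]
  · intro i
    have hd : (M * N) i i = M i i * N i i := by
      rw [Matrix.mul_apply]
      apply Finset.sum_eq_single
      · intro k _ hk
        rcases lt_or_ge (k : ℕ) (i : ℕ) with h | h
        · rw [hM.1 i k h, zero_mul]
        · have h' : (i : ℕ) < (k : ℕ) := lt_of_le_of_ne h (by simpa [Fin.ext_iff, eq_comm] using hk)
          rw [hN.1 k i h', mul_zero]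
      · intro h; exact absurd (Finset.mem_univ i) h
    obtain ⟨hMre, hMim⟩ := hM.2 i
    obtain ⟨hNre, hNim⟩ := hN.2 i
    rw [hd]
    constructor
    · simp [Complex.mul_re, hMim, hNim]; positivity
    · simp [Complex.mul_im, hMim, hNim]

theorem givens_subdiagonal_block {s : ℕ}
    (Cb Sb C S H1 H2 Ξ : Matrix (Fin s) (Fin s) ℂ)
    (hunit : (Matrix.fromBlocks Cb Sb (-S) C)ᴴ * Matrix.fromBlocks Cb Sb (-S) C = 1)
    (helim : Matrix.fromBlocks Cb Sb (-S) C * Matrix.fromRows H1 H2 =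
      Matrix.fromRows Ξ 0)
    (hH2 : UpperTriPosDiag H2)
    (hSb : IsUnit Sb)
    (hSbinv : UpperTriPosDiag (Sb⁻¹)ᴴ) :
    Ξ = (Sb⁻¹)ᴴ * H2 ∧ UpperTriPosDiag Ξ := by
  rw [Matrix.fromBlocks_conjTranspose, Matrix.fromBlocks_multiply, ← Matrix.fromBlocks_one,
    Matrix.fromBlocks_inj] at hunit
  obtain ⟨h11, h12, h21, h22⟩ := hunit
  rw [Matrix.fromBlocks_mul_fromRows, Matrix.fromRows_ext_iff] at helim
  obtain ⟨he1, he2⟩ := helim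
  -- Sbᴴ * Ξ = H2
  have hSH1 : S * H1 = C * H2 := by
    rwa [Matrix.neg_mul, neg_add_eq_zero] at he2
  have hSbCb : Sbᴴ * Cb = Cᴴ * S := by
    rwa [Matrix.mul_neg, add_neg_eq_zero] at h21
  have key : Sbᴴ * Ξ = H2 := by
    calc Sbᴴ * Ξ = Sbᴴ * (Cb * H1 + Sb * H2) := by rw [he1]
    _ = Cᴴ * (S * H1) + Sbᴴ * Sb * H2 := by
        rw [mul_add, ← mul_assoc, hSbCb]; noncomm_ring
    _ = (Cᴴ * C + Sbᴴ * Sb) * H2 := by rw [hSH1]; noncomm_ring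
    _ = H2 := by
        have : Sbᴴ * Sb + Cᴴ * C = 1 := h22
        rw [add_comm] at this
        rw [this, one_mul]
  have hSbH : IsUnit Sbᴴ := (Matrix.isUnit_conjTranspose Sb).mpr hSb
  have hΞ : Ξ = (Sb⁻¹)ᴴ * H2 := by
    rw [Matrix.conjTranspose_nonsing_inv]
    have := congrArg (fun M => (Sbᴴ)⁻¹ * M) key
    simp only [← mul_assoc,
      Matrix.nonsing_inv_mul _ ((Matrix.isUnit_iff_isUnit_det _).mp hSbH), one_mul] at this
    exact this
  refine ⟨hΞ, ?_⟩
  rw [hΞ]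
  exact hSbinv.mul hH2
end

section
/- Let $G, F \in \mathbb{C}^{s\times s}$ with $F$ invertible, and suppose $G^*G + F^*F = N^*N$ for some invertible $N \in \mathbb{C}^{s\times s}$ (so $N^*N \succeq F^*F \succ 0$). Then $(F^*F)^{-1} - (N^*N)^{-1}$ is positive semidefinite, and moreover $(F^*F)^{-1} - (N^*N)^{-1} = (N^*N)^{-1} G^* \left(I - G(N^*N)^{-1}G^*\right)^{-1} G (N^*N)^{-1}$ whenever $I - G(N^*N)^{-1}G^*$ is invertible. -/
/-!
Write `A = NᴴN` and `B = FᴴF`, so that `A = B + GᴴG`. The Woodbury identity gives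
`B⁻¹ - A⁻¹ = (G B⁻¹)ᴴ (1 + G B⁻¹ Gᴴ)⁻¹ (G B⁻¹)`, a congruence of a positive definite matrix, hence
positive semidefinite. Reading the same relation as `B = A - GᴴG` and applying Woodbury with the
opposite sign gives the explicit formula for `B⁻¹ - A⁻¹`.
-/

open Matrix
open scoped ComplexOrder

namespace Matrix

section Woodbury

variable {m n α : Type*} [Fintype m] [Fintype n] [DecidableEq m] [DecidableEq n] [CommRing α]

theorem inv_add_mul_eq_sub (A : Matrix n n α) (U : Matrix n m α) (V : Matrix m n α)
    (hA : IsUnit A) (hVAU : IsUnit (1 + V * A⁻¹ * U)) :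
    (A + U * V)⁻¹ = A⁻¹ - A⁻¹ * U * (1 + V * A⁻¹ * U)⁻¹ * V * A⁻¹ := by
  simpa using add_mul_mul_inv_eq_sub A U 1 V hA isUnit_one (by simpa using hVAU)

theorem inv_sub_mul_eq_add (A : Matrix n n α) (U : Matrix n m α) (V : Matrix m n α)
    (hA : IsUnit A) (hVAU : IsUnit (1 - V * A⁻¹ * U)) :
    (A - U * V)⁻¹ = A⁻¹ + A⁻¹ * U * (1 - V * A⁻¹ * U)⁻¹ * V * A⁻¹ := by
  have := inv_add_mul_eq_sub A (-U) V hA (by simpa [sub_eq_add_neg] using hVAU)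
  simpa [sub_eq_add_neg, Matrix.mul_neg, Matrix.neg_mul] using this

end Woodbury

variable {m n 𝕜 : Type*} [Fintype m] [Fintype n] [DecidableEq m] [DecidableEq n] [RCLike 𝕜]

theorem PosDef.one_add_mul_inv_mul_conjTranspose {B : Matrix n n 𝕜} (hB : B.PosDef)
    (G : Matrix m n 𝕜) : (1 + G * B⁻¹ * Gᴴ).PosDef :=
  PosDef.one.add_posSemidef (hB.inv.posSemidef.mul_mul_conjTranspose_same G)

theorem PosDef.inv_sub_inv_add_conjTranspose_mul_self {B : Matrix n n 𝕜} (hB : B.PosDef)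
    (G : Matrix m n 𝕜) :
    B⁻¹ - (B + Gᴴ * G)⁻¹ = (G * B⁻¹)ᴴ * (1 + G * B⁻¹ * Gᴴ)⁻¹ * (G * B⁻¹) := by
  have hT := hB.one_add_mul_inv_mul_conjTranspose G
  rw [inv_add_mul_eq_sub B Gᴴ G hB.isUnit hT.isUnit, sub_sub_cancel, conjTranspose_mul,
    hB.isHermitian.inv]
  simp only [Matrix.mul_assoc]

theorem PosDef.posSemidef_inv_sub_inv_add_conjTranspose_mul_self {B : Matrix n n 𝕜}
    (hB : B.PosDef) (G : Matrix m n 𝕜) : (B⁻¹ - (B + Gᴴ * G)⁻¹).PosSemidef := by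
  rw [hB.inv_sub_inv_add_conjTranspose_mul_self G]
  exact (hB.one_add_mul_inv_mul_conjTranspose G).inv.posSemidef.conjTranspose_mul_mul_same _

end Matrix

theorem peak_plateau_identity {s : ℕ}
    (G F N : Matrix (Fin s) (Fin s) ℂ)
    (hF : IsUnit F) (hN : IsUnit N)
    (h : Gᴴ * G + Fᴴ * F = Nᴴ * N) :
    ((Fᴴ * F)⁻¹ - (Nᴴ * N)⁻¹).PosSemidef ∧
      (IsUnit (1 - G * (Nᴴ * N)⁻¹ * Gᴴ) →
        (Fᴴ * F)⁻¹ - (Nᴴ * N)⁻¹ =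
          (Nᴴ * N)⁻¹ * Gᴴ * (1 - G * (Nᴴ * N)⁻¹ * Gᴴ)⁻¹ * G * (Nᴴ * N)⁻¹) := by
  have hFF : (Fᴴ * F).PosDef := .conjTranspose_mul_self F (mulVec_injective_iff_isUnit.mpr hF)
  have hNN : Nᴴ * N = Fᴴ * F + Gᴴ * G := by rw [← h, add_comm]
  refine ⟨hNN ▸ hFF.posSemidef_inv_sub_inv_add_conjTranspose_mul_self G, fun hS => ?_⟩
  rw [eq_sub_of_add_eq' h,
    inv_sub_mul_eq_add _ _ _ (((isUnit_conjTranspose N).mpr hN).mul hN) hS, add_sub_cancel_left]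
end

section
/- Let $A \in \mathbb{C}^{m\times m}$, $B \in \mathbb{C}^{m\times s}$, and let $X_k \in \mathbb{C}^{m\times s}$ be such that the residual $R_k = B - AX_k$ satisfies $R_k^* A W = 0$ for all $W$ in the column span of $\{B, AB, \ldots, A^{k-1}B\}$ (i.e. $R_k \perp A\mathcal{K}_k(A,B)$ columnwise). Then for every $Y_k$ whose columns lie in $\mathcal{K}_k(A,B)$ (as a block, $Y_k = \sum_{i=0}^{k-1} A^i B D_i$ with $D_i \in \mathbb{C}^{s\times s}$), the residual $\widetilde{R} = B - AY_k$ satisfies $R_k^* R_k \preceq \widetilde{R}^* \widetilde{R}$ in the Loewner order. -/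
open Matrix
open scoped ComplexOrder

theorem blGMRES_residual_optimality {m s k : ℕ}
    (A : Matrix (Fin m) (Fin m) ℂ)
    (B Xk : Matrix (Fin m) (Fin s) ℂ)
    (Rk : Matrix (Fin m) (Fin s) ℂ)
    (hRk : Rk = B - A * Xk)
    (hXk : ∃ D : Fin k → Matrix (Fin s) (Fin s) ℂ,
      Xk = ∑ i : Fin k, A ^ (i : ℕ) * B * D i)
    (horth : ∀ D : Fin k → Matrix (Fin s) (Fin s) ℂ,
      Rkᴴ * (A * ∑ i : Fin k, A ^ (i : ℕ) * B * D i) = 0) :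
    ∀ D : Fin k → Matrix (Fin s) (Fin s) ℂ,
      ((B - A * ∑ i : Fin k, A ^ (i : ℕ) * B * D i)ᴴ *
          (B - A * ∑ i : Fin k, A ^ (i : ℕ) * B * D i) -
        Rkᴴ * Rk).PosSemidef := by
  intro D
  obtain ⟨D', hD'⟩ := hXk
  set E : Matrix (Fin m) (Fin s) ℂ :=
    A * ∑ i : Fin k, A ^ (i : ℕ) * B * (D' i - D i) with hE
  have hRt : B - A * ∑ i : Fin k, A ^ (i : ℕ) * B * D i = Rk + E := by
    rw [hRk, hE, hD']
    simp only [Matrix.mul_sub, Finset.sum_sub_distrib]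
    abel
  have horthE : Rkᴴ * E = 0 := horth _
  have horthE' : Eᴴ * Rk = 0 := by
    have := congrArg conjTranspose horthE
    simpa [conjTranspose_mul] using this
  have hkey : (Rk + E)ᴴ * (Rk + E) - Rkᴴ * Rk = Eᴴ * E := by
    simp only [conjTranspose_add]
    rw [Matrix.add_mul, Matrix.mul_add, Matrix.mul_add, horthE, horthE']
    abel
  rw [hRt, hkey]
  exact posSemidef_conjTranspose_mul_self E
end

section
/- Let $Z \in \mathbb{C}^{(k s)\times s}$ be a block vector (with $k$ blocks of size $s\times s$) such that $I_{ks} - ZZ^*$ is positive definite, and let $R_Z$ be the unique upper triangular matrix with positive diagonal entries satisfying $R_Z^* R_Z = I_{ks} - ZZ^*$. Then, writing $Z_{1:j}$ for the first $j$ blocks of $Z$, the $j$-th block row of $R_Z^{-*}Z$, namely $W_j := E_j^T R_Z^{-*} Z \in \mathbb{C}^{s\times s}$, satisfies $W_j^* W_j = (I - Z_{1:j}^* Z_{1:j})^{-1} - (I - Z_{1:j-1}^* Z_{1:j-1})^{-1}$ for $j = 1, \ldots, k$ (with the convention that the term for $j=1$ is $(I - Z_{1:0}^*Z_{1:0})^{-1}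 = I$). -/
open Matrix
open scoped ComplexOrder

/-- Gram matrix of the first `j` blocks of a block vector
`Z ∈ ℂ^{ks × s}`: `(Z_{1:j})ᴴ (Z_{1:j}) ∈ ℂ^{s×s}`. -/
noncomputable def partialGram {k s : ℕ} (Z : Matrix (Fin k × Fin s) (Fin s) ℂ) (j : ℕ) :
    Matrix (Fin s) (Fin s) ℂ :=
  fun a b =>
    ∑ p ∈ Finset.univ.filter (fun p : Fin k × Fin s => (p.1 : ℕ) < j),
      (starRingEnd ℂ) (Z p a) * Z p b

/-!
Since `R` is upper triangular, so is `R⁻¹`. Hence the leading principal block `R₁` of `R`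
formed by the first `m` block rows and columns is a Cholesky factor of `I - Z_{1:m} Z_{1:m}ᴴ`,
and the first `m` block rows of `R⁻ᴴ Z` are `R₁⁻ᴴ Z_{1:m}`. Their Gram matrix is therefore
`Z_{1:m}ᴴ (I - Z_{1:m} Z_{1:m}ᴴ)⁻¹ Z_{1:m} = (I - Z_{1:m}ᴴ Z_{1:m})⁻¹ - I` by the push-through
identity, and `W_jᴴ W_j` is the difference of these Gram matrices for `m = j` and `m = j - 1`.
-/

namespace Matrix

variable {ι m n α 𝕜 : Type*} [CommRing 𝕜]

theorem mul_inv_one_sub_mul_mul [Fintype m] [Fintype n] [DecidableEq m] [DecidableEq n]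
    (A : Matrix m n 𝕜) (B : Matrix n m 𝕜) (h : IsUnit (1 - A * B).det) :
    B * (1 - A * B)⁻¹ * A = (1 - B * A)⁻¹ - 1 := by
  rw [eq_sub_iff_add_eq, eq_comm]
  apply inv_eq_right_inv
  have expand : (1 - B * A) * (B * (1 - A * B)⁻¹ * A + 1)
      = 1 + B * ((1 - A * B) * (1 - A * B)⁻¹ - 1) * A := by
    simp only [Matrix.mul_add, Matrix.sub_mul, Matrix.mul_sub, Matrix.one_mul, Matrix.mul_one,
      Matrix.mul_assoc]
    abel
  rw [expand, mul_nonsing_inv _ h, sub_self, Matrix.mul_zero, Matrix.zero_mul, add_zero]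

section LeadingRows

variable [LinearOrder α] (b : ι → α) (c : α)

/-- For `b = Prod.fst` on block indices this is the paper's `Z_{1:c}`. -/
def leadingRows (Z : Matrix ι n 𝕜) : Matrix {i // b i < c} n 𝕜 :=
  Z.submatrix Subtype.val id

variable {b} [StarRing 𝕜]

theorem toBlock_one_sub_mul_conjTranspose [DecidableEq ι] [Fintype n] (Z : Matrix ι n 𝕜) :
    (1 - Z * Zᴴ).toBlock (b · < c) (b · < c)
      = 1 - leadingRows b c Z * (leadingRows b c Z)ᴴ := by
  ext i j
  simp [leadingRows, toBlock_apply, mul_apply, one_apply, Subtype.ext_iff]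

variable [Fintype ι]

theorem BlockTriangular.leadingRows_conjTranspose_mul {T : Matrix ι ι 𝕜}
    (hT : T.BlockTriangular b) (M : Matrix ι n 𝕜) :
    leadingRows b c (Tᴴ * M) = (T.toBlock (b · < c) (b · < c))ᴴ * leadingRows b c M := by
  classical
  ext i a
  simp only [leadingRows, submatrix_apply, id, mul_apply, conjTranspose_apply, toBlock_apply]
  rw [← Fintype.sum_subtype_add_sum_subtype (b · < c), add_eq_left]
  refine Finset.sum_eq_zero fun j _ => ?_
  rw [hT (lt_of_lt_of_le i.2 (not_lt.mp j.2)), star_zero, zero_mul]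

theorem BlockTriangular.toBlock_conjTranspose_mul_self {T : Matrix ι ι 𝕜}
    (hT : T.BlockTriangular b) :
    (Tᴴ * T).toBlock (b · < c) (b · < c)
      = (T.toBlock (b · < c) (b · < c))ᴴ * T.toBlock (b · < c) (b · < c) := by
  ext i j
  exact congr_fun (congr_fun (hT.leadingRows_conjTranspose_mul c T) i) j

theorem BlockTriangular.leadingRows_gram_of_conjTranspose_mul_self [DecidableEq ι] [Fintype n]
    [DecidableEq n] {R : Matrix ι ι 𝕜} (hR : R.BlockTriangular b) (hdet : IsUnit R.det)
    (Z : Matrix ι n 𝕜) (hchol : Rᴴ * R = 1 - Z * Zᴴ) :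
    (leadingRows b c (R⁻¹ᴴ * Z))ᴴ * leadingRows b c (R⁻¹ᴴ * Z)
      = (1 - (leadingRows b c Z)ᴴ * leadingRows b c Z)⁻¹ - 1 := by
  have := R.invertibleOfIsUnitDet hdet
  have := hR.invertibleToBlock c
  set Rc := R.toBlock (b · < c) (b · < c)
  set Zc := leadingRows b c Z
  have hcholc : Rcᴴ * Rc = 1 - Zc * Zcᴴ := by
    rw [← hR.toBlock_conjTranspose_mul_self, hchol, toBlock_one_sub_mul_conjTranspose]
  have hrows : leadingRows b c (R⁻¹ᴴ * Z) = Rc⁻¹ᴴ * Zc := by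
    rw [hR.inv_toBlock]
    exact (blockTriangular_inv_of_blockTriangular hR).leadingRows_conjTranspose_mul c Z
  have hdetc : IsUnit (1 - Zc * Zcᴴ).det := by
    rw [← hcholc, det_mul, det_conjTranspose]
    exact (isUnit_det_of_invertible Rc).star.mul (isUnit_det_of_invertible Rc)
  calc (leadingRows b c (R⁻¹ᴴ * Z))ᴴ * leadingRows b c (R⁻¹ᴴ * Z)
      = Zcᴴ * (Rcᴴ * Rc)⁻¹ * Zc := by
        rw [hrows, conjTranspose_mul, conjTranspose_conjTranspose, mul_inv_rev,
          conjTranspose_nonsing_inv, Matrix.mul_assoc, Matrix.mul_assoc, Matrix.mul_assoc]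
    _ = (1 - Zcᴴ * Zc)⁻¹ - 1 := by
        rw [hcholc, mul_inv_one_sub_mul_mul _ _ hdetc]

end LeadingRows

end Matrix

theorem partialGram_eq_leadingRows {k s : ℕ} (Z : Matrix (Fin k × Fin s) (Fin s) ℂ) (m : ℕ) :
    partialGram Z m
      = (leadingRows (fun p => (p.1 : ℕ)) m Z)ᴴ * leadingRows (fun p => (p.1 : ℕ)) m Z := by
  ext a b
  rw [partialGram, mul_apply,
    Finset.sum_subtype (p := fun p : Fin k × Fin s => (p.1 : ℕ) < m) _ (by simp)]
  rfl

theorem partialGram_succ {k s : ℕ} (Z : Matrix (Fin k × Fin s) (Fin s) ℂ) (j : Fin k) :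
    partialGram Z (j + 1)
      = partialGram Z j + (Z.submatrix (Prod.mk j) id)ᴴ * Z.submatrix (Prod.mk j) id := by
  ext a b
  simp only [partialGram, Matrix.add_apply, mul_apply, Finset.sum_filter, Fintype.sum_prod_type]
  rw [← Fintype.sum_ite_eq' j fun i => ∑ c, (Z.submatrix (Prod.mk i) id)ᴴ a c *
    Z.submatrix (Prod.mk i) id c b, ← Finset.sum_add_distrib]
  refine Finset.sum_congr rfl fun i _ => ?_
  rcases lt_trichotomy i j with h | rfl | h
  · simp [h, h.ne, Nat.lt_succ_of_lt (Fin.lt_def.mp h)]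
  · simp
  · simp [h.ne', (Fin.lt_def.mp h).not_gt, Nat.not_lt.mpr (Nat.succ_le_of_lt (Fin.lt_def.mp h))]

theorem aux_lemma_cholesky_rows_general {k s : ℕ}
    (Z : Matrix (Fin k × Fin s) (Fin s) ℂ)
    (hpd : ((1 : Matrix (Fin k × Fin s) (Fin k × Fin s) ℂ) - Z * Zᴴ).PosDef)
    (R : Matrix (Fin k × Fin s) (Fin k × Fin s) ℂ)
    (hRtri : ∀ p q : Fin k × Fin s,
      (q.1 : ℕ) * s + (q.2 : ℕ) < (p.1 : ℕ) * s + (p.2 : ℕ) → R p q = 0)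
    (hRchol : Rᴴ * R = 1 - Z * Zᴴ) :
    ∀ j : Fin k,
      letI W : Matrix (Fin s) (Fin s) ℂ := fun a b => ((R⁻¹)ᴴ * Z) (j, a) b
      Wᴴ * W =
        (1 - partialGram Z ((j : ℕ) + 1))⁻¹ - (1 - partialGram Z (j : ℕ))⁻¹ := by
  intro j
  have hR : R.BlockTriangular fun p => (p.1 : ℕ) := fun p q hlt =>
    hRtri p q (by nlinarith [q.2.isLt, p.2.isLt])
  have hdet : IsUnit R.det := by
    refine isUnit_of_mul_isUnit_right (x := Rᴴ.det) ?_
    rw [← det_mul, hRchol]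
    exact hpd.det_pos.ne'.isUnit
  have hgram (m : ℕ) : partialGram (R⁻¹ᴴ * Z) m = (1 - partialGram Z m)⁻¹ - 1 := by
    rw [partialGram_eq_leadingRows, partialGram_eq_leadingRows]
    exact hR.leadingRows_gram_of_conjTranspose_mul_self m hdet Z hRchol
  rw [← sub_sub_sub_cancel_right _ _ 1, ← hgram, ← hgram, partialGram_succ, add_sub_cancel_left]
  rfl

theorem aux_lemma_cholesky_rows {k s : ℕ}
    (Z : Matrix (Fin k × Fin s) (Fin s) ℂ)
    (hpd : ((1 : Matrix (Fin k × Fin s) (Fin k × Fin s) ℂ) - Z * Zᴴ).PosDef)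
    (R : Matrix (Fin k × Fin s) (Fin k × Fin s) ℂ)
    (hRtri : ∀ p q : Fin k × Fin s,
      (q.1 : ℕ) * s + (q.2 : ℕ) < (p.1 : ℕ) * s + (p.2 : ℕ) → R p q = 0)
    (hRdiag : ∀ p : Fin k × Fin s, 0 < (R p p).re ∧ (R p p).im = 0)
    (hRchol : Rᴴ * R = 1 - Z * Zᴴ) :
    ∀ j : Fin k,
      letI W : Matrix (Fin s) (Fin s) ℂ := fun a b => ((R⁻¹)ᴴ * Z) (j, a) b
      Wᴴ * W =
        (1 - partialGram Z ((j : ℕ) + 1))⁻¹ - (1 - partialGram Z (j : ℕ))⁻¹ :=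
  aux_lemma_cholesky_rows_general Z hpd R hRtri hRchol
end
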